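/- The structure-constant matrix of the 7-dimensional Lie algebra d_5', regarded over the rational function field ℂ(x_0,x_1,x_2,x_3,y_1), has generic rank 6; hence N(d_5') = 7 − 6 = 1. -/

import Mathlib

/-!
The matrix is antisymmetric of odd order, so its determinant vanishes and its rank is at most 6.
Conversely, the principal minor on the rows and columns `X_0, X_1, X_2, Y_1, V_1, V_2` is a
nonzero polynomial: specialising every variable to `1` gives a complex matrix of determinant 16.
-/

open MvPolynomial
open Fin.NatCast

/-- Entry polynomials (listed direction) of the structure-constant matrix of the
7-dimensional algebra `d_5'` over `ℂ[x_0, x_1, x_2, x_3, y_1]` (variables indexed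
by `Fin 5`: `x_i ↦ i`, `y_1 ↦ 4`).  Basis: `X_0,…,X_3 ↦ 0,…,3`, `Y_1 ↦ 4`,
`V_1 ↦ 5`, `V_2 ↦ 6`. -/
noncomputable def strD5P (i j : ℕ) : MvPolynomial (Fin 5) ℂ :=
  (if i = 0 ∧ (j = 1 ∨ j = 2) then X ((j : Fin 5) + 1) else 0) +
  (if i = 1 ∧ j = 2 then X 4 else 0) +
  (if i = 5 ∧ j ≤ 3 then C ((j + 1 : ℕ) : ℂ) * X (j : Fin 5) else 0) +
  (if i = 5 ∧ j = 4 then (5 : MvPolynomial (Fin 5) ℂ) * X 4 else 0) +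
  (if i = 6 ∧ 1 ≤ j ∧ j ≤ 3 then X (j : Fin 5) else 0) +
  (if i = 6 ∧ j = 4 then (2 : MvPolynomial (Fin 5) ℂ) * X 4 else 0)

/-- The antisymmetric 7×7 structure-constant matrix of `d_5'` over the rational
function field `ℂ(x_0, x_1, x_2, x_3, y_1)`. -/
noncomputable def AD5 :
    Matrix (Fin 7) (Fin 7) (FractionRing (MvPolynomial (Fin 5) ℂ)) :=
  fun i j =>
    algebraMap (MvPolynomial (Fin 5) ℂ) _ (strD5P i.1 j.1 - strD5P j.1 i.1)

namespace Matrix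

variable {n : Type*} [Fintype n] [DecidableEq n]

theorem det_eq_zero_of_transpose_eq_neg {R : Type*} [CommRing R] [IsAddTorsionFree R]
    {A : Matrix n n R} (hA : Aᵀ = -A) (hn : Odd (Fintype.card n)) : A.det = 0 := by
  have h := det_transpose A
  rw [hA, det_neg, hn.neg_one_pow, neg_one_mul] at h
  exact neg_eq_self.mp h

theorem rank_lt_card_of_det_eq_zero {K : Type*} [Field K] {A : Matrix n n K} (h : A.det = 0) :
    A.rank < Fintype.card n := by
  refine A.rank_le_card_width.lt_of_ne fun hA => ?_
  have hrange : LinearMap.range A.mulVecLin = ⊤ :=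
    Submodule.eq_top_of_finrank_eq (by rw [← rank, hA, Module.finrank_fintype_fun_eq_card])
  have hunit : IsUnit A := mulVec_surjective_iff_isUnit.mp (LinearMap.range_eq_top.mp hrange)
  exact ((isUnit_iff_isUnit_det A).mp hunit).ne_zero h

theorem det_map_algebraMap_ne_zero {R K S : Type*} [CommRing R] [CommRing K] [Algebra R K]
    [IsFractionRing R K] [CommRing S] (φ : R →+* S) {M : Matrix n n R}
    (h : (M.map φ).det ≠ 0) : (M.map (algebraMap R K)).det ≠ 0 := by
  rw [← RingHom.mapMatrix_apply, ← RingHom.map_det] at h ⊢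
  exact (map_ne_zero_iff _ (IsFractionRing.injective R K)).mpr fun hM => h (by rw [hM, map_zero])

end Matrix

noncomputable def AD5Poly : Matrix (Fin 7) (Fin 7) (MvPolynomial (Fin 5) ℂ) :=
  fun i j => strD5P i.1 j.1 - strD5P j.1 i.1

theorem AD5_eq_map : AD5 = AD5Poly.map (algebraMap _ _) := rfl

theorem AD5_transpose : AD5.transpose = -AD5 := by
  ext i j
  simp only [AD5, Matrix.transpose_apply, Matrix.neg_apply, ← map_neg, neg_sub]

def d5MinorIdx : Fin 6 → Fin 7 := ![0, 1, 2, 4, 5, 6]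

theorem AD5Poly_minor_eval_one :
    (AD5Poly.submatrix d5MinorIdx d5MinorIdx).map (eval fun _ => (1 : ℂ)) =
      !![0, 1, 1, 0, -1, 0;
         -1, 0, 1, 0, -2, -1;
         -1, -1, 0, 0, -3, -1;
         0, 0, 0, 0, -5, -2;
         1, 2, 3, 5, 0, 0;
         0, 1, 1, 2, 0, 0] := by
  ext i j
  rw [Matrix.map_apply, Matrix.submatrix_apply]
  fin_cases i <;> fin_cases j <;> simp [AD5Poly, strD5P, d5MinorIdx]

theorem det_AD5Poly_minor_eval_one :
    ((AD5Poly.submatrix d5MinorIdx d5MinorIdx).map (eval fun _ => (1 : ℂ))).det = 16 := by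
  rw [AD5Poly_minor_eval_one]
  simp [Matrix.det_succ_row_zero, Fin.sum_univ_succ, Fin.succAbove]
  norm_num

/-- The structure-constant matrix of `d_5'` has generic rank 6 over
`ℂ(x_0,…,x_3,y_1)`; hence `N(d_5') = 7 − 6 = 1`. -/
theorem rank_d5' : AD5.rank = 6 ∧ 7 - AD5.rank = 1 := by
  have hupper : AD5.rank ≤ 6 :=
    Nat.lt_succ_iff.mp <| Matrix.rank_lt_card_of_det_eq_zero <|
      Matrix.det_eq_zero_of_transpose_eq_neg AD5_transpose (by decide)
  have hminor : (AD5.submatrix d5MinorIdx d5MinorIdx).det ≠ 0 := by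
    rw [AD5_eq_map, Matrix.submatrix_map]
    refine Matrix.det_map_algebraMap_ne_zero (eval fun _ => (1 : ℂ)) ?_
    rw [det_AD5Poly_minor_eval_one]
    norm_num
  have hlower : 6 ≤ AD5.rank := by
    simpa [Matrix.rank_of_det_ne_zero hminor] using AD5.rank_submatrix_le d5MinorIdx d5MinorIdx
  omega
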